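/- Let G = (V,E) be a finite simple graph, let k and lb be natural numbers with θ(G,k) ≥ lb, and let c : V → ℕ be a proper coloring of G (adjacent vertices receive distinct colors). If u ∈ V is a vertex whose saturation ds_c(u), defined as the number of distinct colors appearing on the open neighborhood N(u), satisfies ds_c(u) ≤ lb − 2, then θ(G,k) = θ(G[V ∖ {u}], k). -/

import Mathlib

/-!
Deleting `u` cannot increase `theta`: an optimal deletion set for `G` restricts to one for
`G - u`. Conversely, view an optimal deletion set `S` of `G - u` inside `G`. A maximum clique of
`G - S` avoiding `u` is a clique of `(G - u) - S`. One containing `u` is impossible: its other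
vertices are neighbours of `u` with pairwise distinct colours, so it has at most
`ds_c(u) + 1 ≤ lb - 1 < theta G k` vertices.
-/

open SimpleGraph

/-- `theta G k` is the minimum, over all vertex subsets `S` with `|S| ≤ k`, of the
clique number of the subgraph of `G` induced on the complement of `S`. -/
noncomputable def theta {V : Type*} (G : SimpleGraph V) (k : ℕ) : ℕ :=
  sInf {m | ∃ S : Finset V, S.card ≤ k ∧ (G.induce ((↑S : Set V)ᶜ)).cliqueNum = m}

open Finset

namespace SimpleGraph

variable {V : Type*} {G : SimpleGraph V}

lemma exists_isNClique_cliqueNum_induce (s : Set V) :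
    ∃ t : Finset V, ↑t ⊆ s ∧ G.IsNClique (G.induce s).cliqueNum t := by
  obtain ⟨t, ht⟩ := (G.induce s).exists_isNClique_cliqueNum
  refine ⟨t.map (.subtype _), ?_, (isNClique_induce_iff s t _).1 ht⟩
  simp

lemma IsClique.isNClique_induce_subtype {s : Set V} [DecidablePred (· ∈ s)] {t : Finset V}
    (ht : G.IsClique ↑t) (hts : ↑t ⊆ s) : (G.induce s).IsNClique #t (t.subtype (· ∈ s)) := by
  rw [isNClique_induce_iff, subtype_map_of_mem fun _ hx => hts hx]
  exact ⟨ht, rfl⟩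

variable [Finite V]

lemma IsClique.card_le_cliqueNum_induce {s : Set V} {t : Finset V} (ht : G.IsClique ↑t)
    (hts : ↑t ⊆ s) : #t ≤ (G.induce s).cliqueNum := by
  classical
  have hcl := ht.isNClique_induce_subtype hts
  exact hcl.card_eq ▸ hcl.isClique.card_le_cliqueNum

lemma cliqueNum_induce_mono {s t : Set V} (hst : s ⊆ t) :
    (G.induce s).cliqueNum ≤ (G.induce t).cliqueNum := by
  obtain ⟨c, hcs, hc⟩ := G.exists_isNClique_cliqueNum_induce s
  exact hc.card_eq ▸ hc.isClique.card_le_cliqueNum_induce (hcs.trans hst)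

lemma cliqueNum_induce_induce (s : Set V) (t : Set s) :
    ((G.induce s).induce t).cliqueNum = (G.induce (Subtype.val '' t)).cliqueNum := by
  classical
  refine le_antisymm ?_ ?_
  · obtain ⟨c, hct, hc⟩ := (G.induce s).exists_isNClique_cliqueNum_induce t
    rw [isNClique_induce_iff] at hc
    refine hc.card_eq ▸ hc.isClique.card_le_cliqueNum_induce ?_
    simpa using Set.image_mono (f := Subtype.val) hct
  · obtain ⟨c, hct, hc⟩ := G.exists_isNClique_cliqueNum_induce (Subtype.val '' t)
    have hcs : ↑c ⊆ s := hct.trans (by simp)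
    have hcl := hc.isClique.isNClique_induce_subtype hcs
    rw [← hc.card_eq]
    refine hcl.card_eq ▸ hcl.isClique.card_le_cliqueNum_induce fun x hx => ?_
    obtain ⟨y, hy, hyx⟩ := hct (mem_subtype.1 hx)
    rwa [← Subtype.ext hyx]

lemma IsClique.card_le_ncard_image_neighborSet_add_one {α : Type*} {c : V → α}
    (hc : ∀ a b, G.Adj a b → c a ≠ c b) {t : Finset V} (ht : G.IsClique ↑t) {u : V}
    (hu : u ∈ t) : #t ≤ (c '' G.neighborSet u).ncard + 1 := by
  classical
  have hsub : ↑(t.erase u) ⊆ G.neighborSet u := fun v hv =>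
    ht hu (mem_of_mem_erase hv) (ne_of_mem_erase hv).symm
  have hinj : Set.InjOn c ↑(t.erase u) := fun a ha b hb hab => by
    by_contra hne
    exact hc a b (ht (mem_of_mem_erase ha) (mem_of_mem_erase hb) hne) hab
  calc #t = #(t.erase u) + 1 := (card_erase_add_one hu).symm
    _ = (c '' ↑(t.erase u)).ncard + 1 := by rw [hinj.ncard_image, Set.ncard_coe_finset]
    _ ≤ (c '' G.neighborSet u).ncard + 1 := by
      gcongr
      exact Set.toFinite _

end SimpleGraph

section Theta

variable {V : Type*} {G : SimpleGraph V} {k : ℕ}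

lemma theta_le_cliqueNum_induce {S : Finset V} (hS : #S ≤ k) :
    theta G k ≤ (G.induce (↑S)ᶜ).cliqueNum :=
  Nat.sInf_le ⟨S, hS, rfl⟩

lemma exists_cliqueNum_induce_eq_theta (G : SimpleGraph V) (k : ℕ) :
    ∃ S : Finset V, #S ≤ k ∧ (G.induce (↑S)ᶜ).cliqueNum = theta G k :=
  Nat.sInf_mem (s := {m | ∃ S : Finset V, #S ≤ k ∧ (G.induce (↑S)ᶜ).cliqueNum = m})
    ⟨_, ∅, by simp, rfl⟩

variable [Finite V]

lemma theta_induce_le (s : Set V) : theta (G.induce s) k ≤ theta G k := by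
  classical
  obtain ⟨S, hS, hSθ⟩ := exists_cliqueNum_induce_eq_theta G k
  set S' : Finset s := S.subtype (· ∈ s)
  have hS' : #S' ≤ k := by
    rw [card_subtype]
    exact (card_filter_le _ _).trans hS
  calc theta (G.induce s) k ≤ ((G.induce s).induce (↑S')ᶜ).cliqueNum :=
        theta_le_cliqueNum_induce hS'
    _ = (G.induce (Subtype.val '' (↑S' : Set s)ᶜ)).cliqueNum := cliqueNum_induce_induce _ _
    _ ≤ (G.induce (↑S)ᶜ).cliqueNum :=
        cliqueNum_induce_mono <| by
          rintro _ ⟨x, hx, rfl⟩ hxS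
          exact hx (mem_subtype.2 hxS)
    _ = theta G k := hSθ

lemma theta_le_theta_induce {s : Set V}
    (hs : ∀ t : Finset V, G.IsClique ↑t → ¬↑t ⊆ s → #t < theta G k) :
    theta G k ≤ theta (G.induce s) k := by
  obtain ⟨S, hS, hSθ⟩ := exists_cliqueNum_induce_eq_theta (G.induce s) k
  obtain ⟨t, htS, ht⟩ := G.exists_isNClique_cliqueNum_induce (↑(S.map (.subtype _)))ᶜ
  have hθt : theta G k ≤ #t := ht.card_eq ▸ theta_le_cliqueNum_induce (by simpa using hS)
  have hts : ↑t ⊆ s := by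
    by_contra hts
    exact (hs t ht.isClique hts).not_ge hθt
  calc theta G k ≤ #t := hθt
    _ ≤ (G.induce (Subtype.val '' (↑S)ᶜ)).cliqueNum :=
        ht.isClique.card_le_cliqueNum_induce fun x hx =>
          ⟨⟨x, hts hx⟩, fun hxS => htS hx (by simpa using ⟨hts hx, hxS⟩), rfl⟩
    _ = theta (G.induce s) k := (cliqueNum_induce_induce _ _).symm.trans hSθ

end Theta

theorem color_reduction {V : Type*} [Fintype V] (G : SimpleGraph V) (k lb : ℕ)
    (hlb : lb ≤ theta G k) (c : V → ℕ)
    (hc : ∀ a b : V, G.Adj a b → c a ≠ c b) (u : V)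
    (h : ((c '' G.neighborSet u).ncard : ℤ) ≤ (lb : ℤ) - 2) :
    theta G k = theta (G.induce ({u}ᶜ : Set V)) k := by
  refine le_antisymm (theta_le_theta_induce fun t ht hts => ?_) (theta_induce_le _)
  have hut : u ∈ t := by simpa using hts
  have hcard := ht.card_le_ncard_image_neighborSet_add_one hc hut
  omega
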